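/- arXiv:2303.11832 — 4 statements merged into one kernel-verified Lean document; each statement's English description precedes it below -/
import Mathlib

section
/- Let H be a Hilbert space and (x_n) a bounded sequence in H. If for every positive integer h the Cesàro averages (1/N)∑_{n=1}^N ⟨x_{n+h}, x_n⟩ tend to 0 as N → ∞, then ‖(1/N)∑_{n=1}^N x_n‖ tends to 0 as N → ∞. -/
/-!
Averaging over `D` consecutive shifts moves the Cesàro mean `‖∑_{n<N} y n‖ / N` by at most
`2DC/N`. By Cauchy–Schwarz, the square of the shifted average is at most `D⁻²` times the sum over
pairs `(d, d')` of the averaged correlations `N⁻¹ ∑_{n<N} ⟪y (n + d), y (n + d')⟫`: the `D`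
diagonal terms contribute at most `C²/D`, and each off-diagonal one is a shifted (possibly
conjugated) correlation of lag `|d - d'|`, which tends to `0`. So the mean is eventually below
`C/√D + ε` for every `D`.
-/

open Filter Finset Topology
open scoped InnerProductSpace ComplexConjugate

theorem tendsto_nhds_zero_of_forall_eventually_le {ι α : Type*} {l : Filter ι} [l.NeBot]
    {f : Filter α} {a : α → ℝ} {R : ι → α → ℝ} {L : ι → ℝ} (ha : ∀ t, 0 ≤ a t)
    (hL : Tendsto L l (𝓝 0)) (hR : ∀ i, Tendsto (R i) f (𝓝 (L i)))
    (haR : ∀ᶠ i in l, ∀ᶠ t in f, a t ≤ R i t) : Tendsto a f (𝓝 0) := by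
  refine tendsto_order.2 ⟨fun b hb => Eventually.of_forall fun t => hb.trans_le (ha t),
    fun ε hε => ?_⟩
  obtain ⟨i, hLi, hai⟩ := ((hL.eventually (gt_mem_nhds hε)).and haR).exists
  filter_upwards [hai, (hR i).eventually (gt_mem_nhds hLi)] with t hat hRt
  exact hat.trans_lt hRt

theorem Finset.sum_product_self_le_card_mul_add_sum_offDiag {α : Type*} [DecidableEq α]
    (s : Finset α) {f : α × α → ℝ} {M : ℝ} (hf : ∀ a ∈ s, f (a, a) ≤ M) :
    ∑ p ∈ s ×ˢ s, f p ≤ #s * M + ∑ p ∈ s.offDiag, f p := by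
  rw [← diag_union_offDiag, sum_union (disjoint_diag_offDiag s), ← diag_card, ← nsmul_eq_mul]
  refine add_le_add_left (sum_le_card_nsmul _ _ _ fun p hp => ?_) _
  obtain ⟨a, b⟩ := p
  obtain ⟨ha, hab : a = b⟩ := mem_diag.1 hp
  exact hab ▸ hf a ha

theorem norm_sum_sq_le_card_mul_sum_norm_sq {ι E : Type*} [SeminormedAddCommGroup E]
    (s : Finset ι) (v : ι → E) : ‖∑ i ∈ s, v i‖ ^ 2 ≤ #s * ∑ i ∈ s, ‖v i‖ ^ 2 :=
  (pow_le_pow_left₀ (norm_nonneg _) (norm_sum_le s v) 2).trans sq_sum_le_card_mul_sum_sq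

section Shift

variable {E : Type*} [SeminormedAddCommGroup E] {g : ℕ → E} {C : ℝ}

theorem norm_sum_range_sub_sum_range_add_le (hg : ∀ n, ‖g n‖ ≤ C) (N k : ℕ) :
    ‖∑ n ∈ range N, g n - ∑ n ∈ range N, g (n + k)‖ ≤ 2 * k * C := by
  have hsplit : ∑ n ∈ range N, g n - ∑ n ∈ range N, g (n + k)
      = ∑ n ∈ range k, g n - ∑ n ∈ range k, g (N + n) := by
    rw [sub_eq_sub_iff_add_eq_add, ← sum_range_add, add_comm N k, sum_range_add]
    simp only [add_comm k]
  have hblock : ∀ m, ‖∑ n ∈ range k, g (m + n)‖ ≤ k * C := fun m => by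
    simpa using norm_sum_le_of_le (range k) fun n _ => hg (m + n)
  calc ‖∑ n ∈ range N, g n - ∑ n ∈ range N, g (n + k)‖
      ≤ ‖∑ n ∈ range k, g (0 + n)‖ + ‖∑ n ∈ range k, g (N + n)‖ := by
        simpa only [hsplit, zero_add] using norm_sub_le _ _
    _ ≤ 2 * k * C := by linarith [hblock 0, hblock N]

theorem tendsto_average_shift_of_bounded {𝕜 : Type*} [RCLike 𝕜] [NormedSpace 𝕜 E]
    (hg : ∀ n, ‖g n‖ ≤ C) (k : ℕ) {a : E}
    (h : Tendsto (fun N : ℕ => (1 / (N : 𝕜)) • ∑ n ∈ range N, g n) atTop (𝓝 a)) :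
    Tendsto (fun N : ℕ => (1 / (N : 𝕜)) • ∑ n ∈ range N, g (n + k)) atTop (𝓝 a) := by
  refine h.congr_dist (squeeze_zero (fun _ => dist_nonneg) (fun N => ?_)
    (tendsto_const_div_atTop_nhds_zero_nat (2 * k * C)))
  rw [dist_eq_norm, ← smul_sub, norm_smul, norm_div, norm_one, RCLike.norm_natCast,
    one_div_mul_eq_div]
  exact div_le_div_of_nonneg_right (norm_sum_range_sub_sum_range_add_le hg N k) N.cast_nonneg

theorem norm_sum_sum_shift_sub_nsmul_le (hg : ∀ n, ‖g n‖ ≤ C) (N D : ℕ) :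
    ‖D • ∑ n ∈ range N, g n - ∑ n ∈ range N, ∑ d ∈ range D, g (n + d)‖ ≤ 2 * D ^ 2 * C := by
  have hC : 0 ≤ C := (norm_nonneg _).trans (hg 0)
  rw [show D • ∑ n ∈ range N, g n - ∑ n ∈ range N, ∑ d ∈ range D, g (n + d)
      = ∑ d ∈ range D, (∑ n ∈ range N, g n - ∑ n ∈ range N, g (n + d)) by
    rw [sum_sub_distrib, sum_const, card_range, sum_comm]]
  calc ‖∑ d ∈ range D, (∑ n ∈ range N, g n - ∑ n ∈ range N, g (n + d))‖
      ≤ ∑ _d ∈ range D, 2 * D * C := norm_sum_le_of_le _ fun d hd =>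
        (norm_sum_range_sub_sum_range_add_le hg N d).trans <| by
          gcongr; exact_mod_cast (mem_range.1 hd).le
    _ = 2 * D ^ 2 * C := by rw [sum_const, card_range, nsmul_eq_mul]; ring

end Shift

section Correlation

variable (𝕜 : Type*) {H : Type*} [RCLike 𝕜] [NormedAddCommGroup H] [InnerProductSpace 𝕜 H]

theorem norm_sum_sq_eq_sum_sum_re_inner {ι : Type*} (s : Finset ι) (v : ι → H) :
    ‖∑ i ∈ s, v i‖ ^ 2 = ∑ i ∈ s, ∑ j ∈ s, RCLike.re ⟪v i, v j⟫_𝕜 := by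
  rw [← inner_self_eq_norm_sq (𝕜 := 𝕜), sum_inner, map_sum]
  simp only [inner_sum, map_sum]

def avgCorrelation (y : ℕ → H) (d d' N : ℕ) : 𝕜 :=
  (1 / (N : 𝕜)) * ∑ n ∈ range N, ⟪y (n + d), y (n + d')⟫_𝕜

variable {𝕜} {y : ℕ → H} {C : ℝ}

theorem norm_inner_le_sq_of_norm_le (hy : ∀ n, ‖y n‖ ≤ C) (m m' : ℕ) :
    ‖⟪y m, y m'⟫_𝕜‖ ≤ C ^ 2 :=
  (norm_inner_le_norm _ _).trans
    (by nlinarith [hy m, hy m', norm_nonneg (y m), norm_nonneg (y m')])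

theorem norm_avgCorrelation (d d' N : ℕ) :
    ‖avgCorrelation 𝕜 y d d' N‖ = ‖∑ n ∈ range N, ⟪y (n + d), y (n + d')⟫_𝕜‖ / N := by
  rw [avgCorrelation, norm_mul, norm_div, norm_one, RCLike.norm_natCast, one_div_mul_eq_div]

theorem norm_avgCorrelation_le (hy : ∀ n, ‖y n‖ ≤ C) (d d' N : ℕ) :
    ‖avgCorrelation 𝕜 y d d' N‖ ≤ C ^ 2 := by
  rw [norm_avgCorrelation]
  refine div_le_of_le_mul₀ N.cast_nonneg (sq_nonneg C) ?_
  simpa [mul_comm] using norm_sum_le_of_le (range N) fun n _ =>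
    norm_inner_le_sq_of_norm_le (𝕜 := 𝕜) hy (n + d) (n + d')

theorem avgCorrelation_swap (d d' N : ℕ) :
    avgCorrelation 𝕜 y d' d N = conj (avgCorrelation 𝕜 y d d' N) := by
  simp only [avgCorrelation, map_mul, map_div₀, map_one, map_natCast, map_sum, inner_conj_symm]

theorem tendsto_avgCorrelation_of_ne (hy : ∀ n, ‖y n‖ ≤ C)
    (hcorr : ∀ h, 0 < h →
      Tendsto (fun N : ℕ => (1 / (N : 𝕜)) * ∑ n ∈ range N, ⟪y (n + h), y n⟫_𝕜) atTop (𝓝 0))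
    {d d' : ℕ} (hne : d ≠ d') : Tendsto (avgCorrelation 𝕜 y d d') atTop (𝓝 0) := by
  wlog hlt : d' < d generalizing d d'
  · have hswap := (this hne.symm (lt_of_le_of_ne (not_lt.1 hlt) hne)).star
    rw [star_zero] at hswap
    exact hswap.congr fun N => by rw [avgCorrelation_swap d' d, RCLike.star_def]
  obtain ⟨h, rfl⟩ := Nat.exists_eq_add_of_lt hlt
  have hshift := tendsto_average_shift_of_bounded (𝕜 := 𝕜)
    (fun m => norm_inner_le_sq_of_norm_le (𝕜 := 𝕜) hy (m + (h + 1)) m) d'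
    (by simpa only [smul_eq_mul] using hcorr (h + 1) h.succ_pos)
  simp only [smul_eq_mul, add_assoc] at hshift
  exact hshift

theorem norm_sum_sum_shift_sq_le (hy : ∀ n, ‖y n‖ ≤ C) (N D : ℕ) :
    ‖∑ n ∈ range N, ∑ d ∈ range D, y (n + d)‖ ^ 2 ≤
      N ^ 2 * (D * C ^ 2 + ∑ p ∈ (range D).offDiag, ‖avgCorrelation 𝕜 y p.1 p.2 N‖) := by
  have hsum_inner : ∀ d d', ‖∑ n ∈ range N, ⟪y (n + d), y (n + d')⟫_𝕜‖
      = N * ‖avgCorrelation 𝕜 y d d' N‖ := fun d d' => by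
    rcases N.eq_zero_or_pos with rfl | hN
    · simp
    · rw [norm_avgCorrelation, mul_div_cancel₀ _ (by positivity)]
  calc ‖∑ n ∈ range N, ∑ d ∈ range D, y (n + d)‖ ^ 2
      ≤ N * ∑ n ∈ range N, ‖∑ d ∈ range D, y (n + d)‖ ^ 2 := by
        simpa using norm_sum_sq_le_card_mul_sum_norm_sq (range N) _
    _ = N * ∑ p ∈ range D ×ˢ range D,
          RCLike.re (∑ n ∈ range N, ⟪y (n + p.1), y (n + p.2)⟫_𝕜) := by
        simp only [norm_sum_sq_eq_sum_sum_re_inner 𝕜, sum_product, map_sum]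
        rw [sum_comm]
        simp only [sum_comm (s := range N)]
    _ ≤ N * ∑ p ∈ range D ×ˢ range D, N * ‖avgCorrelation 𝕜 y p.1 p.2 N‖ := by
        gcongr with p
        exact (RCLike.re_le_norm _).trans (hsum_inner p.1 p.2).le
    _ = N ^ 2 * ∑ p ∈ range D ×ˢ range D, ‖avgCorrelation 𝕜 y p.1 p.2 N‖ := by
        rw [← mul_sum]; ring
    _ ≤ N ^ 2 * (D * C ^ 2 + ∑ p ∈ (range D).offDiag, ‖avgCorrelation 𝕜 y p.1 p.2 N‖) := by
        gcongr
        simpa using (range D).sum_product_self_le_card_mul_add_sum_offDiag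
          fun d _ => norm_avgCorrelation_le (𝕜 := 𝕜) hy d d N

theorem norm_sum_range_div_le (hy : ∀ n, ‖y n‖ ≤ C) {N D : ℕ} (hN : 0 < N) (hD : 0 < D) :
    ‖∑ n ∈ range N, y n‖ / N ≤ 2 * D * C / N +
      √(C ^ 2 / D + (∑ p ∈ (range D).offDiag, ‖avgCorrelation 𝕜 y p.1 p.2 N‖) / D ^ 2) := by
  set S := ∑ n ∈ range N, y n
  set T := ∑ n ∈ range N, ∑ d ∈ range D, y (n + d)
  set offDiagSum := ∑ p ∈ (range D).offDiag, ‖avgCorrelation 𝕜 y p.1 p.2 N‖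
  have hsmooth : D * ‖S‖ ≤ ‖T‖ + 2 * D ^ 2 * C := by
    rw [← nsmul_eq_mul, ← RCLike.norm_nsmul 𝕜]
    exact (norm_le_insert' _ T).trans
      (add_le_add le_rfl (norm_sum_sum_shift_sub_nsmul_le hy N D))
  have hsquare : ‖T‖ / (N * D) ≤ √(C ^ 2 / D + offDiagSum / D ^ 2) := by
    rw [Real.le_sqrt (by positivity) (by positivity)]
    calc (‖T‖ / (N * D)) ^ 2 = ‖T‖ ^ 2 / (N ^ 2 * D ^ 2) := by ring
      _ ≤ N ^ 2 * (D * C ^ 2 + offDiagSum) / (N ^ 2 * D ^ 2) := by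
          gcongr; exact norm_sum_sum_shift_sq_le hy N D
      _ = C ^ 2 / D + offDiagSum / D ^ 2 := by field_simp
  calc ‖S‖ / N = D * ‖S‖ / (N * D) := by field_simp
    _ ≤ (‖T‖ + 2 * D ^ 2 * C) / (N * D) := by gcongr
    _ = 2 * D * C / N + ‖T‖ / (N * D) := by field_simp; ring
    _ ≤ 2 * D * C / N + √(C ^ 2 / D + offDiagSum / D ^ 2) := by gcongr

theorem tendsto_norm_sum_range_div_of_tendsto_correlation (hy : ∀ n, ‖y n‖ ≤ C)
    (hcorr : ∀ h, 0 < h →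
      Tendsto (fun N : ℕ => (1 / (N : 𝕜)) * ∑ n ∈ range N, ⟪y (n + h), y n⟫_𝕜) atTop (𝓝 0)) :
    Tendsto (fun N : ℕ => ‖∑ n ∈ range N, y n‖ / N) atTop (𝓝 0) := by
  refine tendsto_nhds_zero_of_forall_eventually_le (l := atTop) (L := fun D : ℕ => √(C ^ 2 / D))
    (R := fun D N => 2 * D * C / N +
      √(C ^ 2 / D + (∑ p ∈ (range D).offDiag, ‖avgCorrelation 𝕜 y p.1 p.2 N‖) / D ^ 2))
    (fun _ => by positivity) ?_ (fun D => ?_) ?_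
  · simpa using (tendsto_const_div_atTop_nhds_zero_nat (C ^ 2)).sqrt
  · have hoff : Tendsto (fun N => ∑ p ∈ (range D).offDiag, ‖avgCorrelation 𝕜 y p.1 p.2 N‖)
        atTop (𝓝 0) := by
      simpa using tendsto_finsetSum _ fun p hp =>
        (tendsto_avgCorrelation_of_ne hy hcorr (mem_offDiag.1 hp).2.2).norm
    simpa only [zero_div, add_zero, zero_add] using
      (tendsto_const_div_atTop_nhds_zero_nat (2 * D * C)).add
        ((hoff.div_const ((D : ℝ) ^ 2)).const_add (C ^ 2 / D)).sqrt
  · filter_upwards [eventually_gt_atTop 0] with D hD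
    filter_upwards [eventually_gt_atTop 0] with N hN
    exact norm_sum_range_div_le hy hN hD

end Correlation

/-- van der Corput's difference theorem, version (i). -/
theorem vdc_i {H : Type*} [NormedAddCommGroup H] [InnerProductSpace ℂ H]
    (x : ℕ → H) (hbdd : ∃ C : ℝ, ∀ n, ‖x n‖ ≤ C)
    (hcorr : ∀ h : ℕ, 0 < h →
      Tendsto (fun N : ℕ =>
          (1 / (N : ℂ)) * ∑ n ∈ Finset.range N, (inner ℂ (x (n + 1 + h)) (x (n + 1)) : ℂ))
        atTop (nhds 0)) :
    Tendsto (fun N : ℕ => ‖(1 / (N : ℝ)) • ∑ n ∈ Finset.range N, x (n + 1)‖)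
      atTop (nhds 0) := by
  obtain ⟨C, hC⟩ := hbdd
  have hcorr' : ∀ h, 0 < h → Tendsto (fun N : ℕ =>
      (1 / (N : ℂ)) * ∑ n ∈ range N, ⟪x (n + h + 1), x (n + 1)⟫_ℂ) atTop (𝓝 0) :=
    fun h hh => by simpa only [add_right_comm _ h 1] using hcorr h hh
  refine (tendsto_norm_sum_range_div_of_tendsto_correlation (y := fun n => x (n + 1))
    (fun n => hC (n + 1)) hcorr').congr fun N => ?_
  rw [norm_smul, Real.norm_of_nonneg (by positivity), one_div_mul_eq_div]
end

section
/- Let (X, B, μ) be a probability space, S : X → X an invertible totally ergodic measure preserving transformation, g ∈ L²(X,μ), and p ∈ ℤ[x] a polynomial of degree at least 2. If E[g | I_S] = 0 and E[g | K_rat(S)] = 0 (equivalently the spectral measure μ_{g,S} has no rational atoms), then for every h ∈ ℕ, lim_{N→∞} (1/N)∑_{n=1}^N ⟨S^{p(n+h)}g, S^{p(n)}g⟩ = 0. -/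
open MeasureTheory Filter Finset Polynomial
open scoped Real FourierTransform ComplexConjugate Topology

/-!
Since `⟨S^a g, S^b g⟩ = ν̂(a - b)`, the averaged correlations are
`∫ (1/N) ∑ₙ e(-(p(n+1+h) - p(n+1)) x) dν(x)`. As `ν` gives no mass to the rationals, dominated
convergence reduces the claim to the vanishing of these exponential averages for irrational `x`.
There `n ↦ -x (p(n+1+h) - p(n+1))` is a real polynomial of degree `deg p - 1 ≥ 1` with irrational
leading coefficient, so this is Weyl's theorem, proved by induction on the degree: linear phases
give bounded geometric sums, and van der Corput's inequality passes from `f` to the differences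
`f(n+k) - f(n)`, whose degree is one less.
-/

lemma norm_sum_range_add_sub_sum_range_le {E : Type*} [SeminormedAddCommGroup E] {v : ℕ → E}
    {C : ℝ} (hv : ∀ n, ‖v n‖ ≤ C) (N h : ℕ) :
    ‖∑ n ∈ range N, v (n + h) - ∑ n ∈ range N, v n‖ ≤ 2 * h * C := by
  have hsplit : ∑ n ∈ range N, v (n + h) - ∑ n ∈ range N, v n
      = ∑ n ∈ range h, v (N + n) - ∑ n ∈ range h, v n := by
    have h₁ := sum_range_add v h N
    rw [Nat.add_comm h N, sum_range_add v N h] at h₁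
    simp only [Nat.add_comm _ h]
    rw [sub_eq_sub_iff_add_eq_add, add_comm, ← h₁, add_comm]
  have hbound : ∀ w : ℕ → E, (∀ n, ‖w n‖ ≤ C) → ‖∑ n ∈ range h, w n‖ ≤ h * C := fun w hw => by
    simpa using norm_sum_le_of_le (range h) fun n _ => hw n
  rw [hsplit]
  linarith [norm_sub_le (∑ n ∈ range h, v (N + n)) (∑ n ∈ range h, v n),
    hbound _ fun n => hv (N + n), hbound v hv]

section VanDerCorput

variable {u : ℕ → ℂ}

lemma norm_natCast_mul_sum_sub_sum_window_le (hu : ∀ n, ‖u n‖ ≤ 1) (H N : ℕ) :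
    ‖(H : ℂ) * ∑ n ∈ range N, u n - ∑ n ∈ range N, ∑ d ∈ range H, u (n + d)‖ ≤ 2 * H ^ 2 := by
  have hdiff : (H : ℂ) * ∑ n ∈ range N, u n - ∑ n ∈ range N, ∑ d ∈ range H, u (n + d)
      = ∑ d ∈ range H, (∑ n ∈ range N, u n - ∑ n ∈ range N, u (n + d)) := by
    rw [sum_sub_distrib, sum_const, card_range, nsmul_eq_mul, sum_comm]
  rw [hdiff]
  calc ‖∑ d ∈ range H, (∑ n ∈ range N, u n - ∑ n ∈ range N, u (n + d))‖
      ≤ ∑ _d ∈ range H, 2 * (H : ℝ) := norm_sum_le_of_le _ fun d hd => by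
        rw [norm_sub_rev]
        have hdH : (d : ℝ) ≤ H := by exact_mod_cast (mem_range.mp hd).le
        linarith [norm_sum_range_add_sub_sum_range_le hu N d]
    _ = 2 * H ^ 2 := by rw [sum_const, card_range, nsmul_eq_mul]; ring

lemma norm_sum_mul_conj_le_of_le (hu : ∀ n, ‖u n‖ ≤ 1) (N : ℕ) {d₁ d₂ : ℕ} (h : d₂ ≤ d₁) :
    ‖∑ n ∈ range N, u (n + d₁) * conj (u (n + d₂))‖
      ≤ ‖∑ n ∈ range N, u (n + (d₁ - d₂)) * conj (u n)‖ + 2 * d₂ := by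
  set w : ℕ → ℂ := fun n => u (n + (d₁ - d₂)) * conj (u n)
  have hw : ∀ n, ‖w n‖ ≤ 1 := fun n => by
    simpa [w] using mul_le_one₀ (hu _) (norm_nonneg _) (hu n)
  have hshift : ∑ n ∈ range N, u (n + d₁) * conj (u (n + d₂)) = ∑ n ∈ range N, w (n + d₂) :=
    sum_congr rfl fun n _ => by simp only [w]; rw [show n + d₂ + (d₁ - d₂) = n + d₁ by omega]
  rw [hshift]
  have := norm_sum_range_add_sub_sum_range_le hw N d₂
  calc ‖∑ n ∈ range N, w (n + d₂)‖
      ≤ ‖∑ n ∈ range N, w (n + d₂) - ∑ n ∈ range N, w n‖ + ‖∑ n ∈ range N, w n‖ :=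
        norm_le_norm_sub_add _ _
    _ ≤ _ := by linarith

lemma norm_sum_mul_conj_le_sum_correlations (hu : ∀ n, ‖u n‖ ≤ 1) (H N : ℕ) {d₁ d₂ : ℕ}
    (hd₁ : d₁ < H) (hd₂ : d₂ < H) :
    ‖∑ n ∈ range N, u (n + d₁) * conj (u (n + d₂))‖
      ≤ (if d₁ = d₂ then (N : ℝ) else 0)
        + (∑ k ∈ Ico 1 H, ‖∑ n ∈ range N, u (n + k) * conj (u n)‖ + 2 * H) := by
  wlog hle : d₂ ≤ d₁ generalizing d₁ d₂
  · have hsymm : ‖∑ n ∈ range N, u (n + d₁) * conj (u (n + d₂))‖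
        = ‖∑ n ∈ range N, u (n + d₂) * conj (u (n + d₁))‖ := by
      rw [← Complex.norm_conj, map_sum]
      simp only [map_mul, Complex.conj_conj, mul_comm]
    simpa only [hsymm, @eq_comm _ d₂] using this hd₂ hd₁ (le_of_not_ge hle)
  have hcorr : 0 ≤ ∑ k ∈ Ico 1 H, ‖∑ n ∈ range N, u (n + k) * conj (u n)‖ :=
    sum_nonneg fun _ _ => norm_nonneg _
  have hd₂H : (d₂ : ℝ) ≤ H := by exact_mod_cast hd₂.le
  have hshift := norm_sum_mul_conj_le_of_le hu N hle
  split_ifs with heq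
  · subst heq
    have hdiag : ‖∑ n ∈ range N, u (n + d₁) * conj (u (n + d₁))‖ ≤ N := by
      simpa using norm_sum_le_of_le (range N) fun n _ =>
        (norm_mul_le _ _).trans (mul_le_one₀ (hu (n + d₁)) (norm_nonneg _)
          ((Complex.norm_conj _).le.trans (hu (n + d₁))))
    linarith
  · have hmem : d₁ - d₂ ∈ Ico 1 H := mem_Ico.mpr ⟨by omega, by omega⟩
    have hle' := single_le_sum (f := fun k => ‖∑ n ∈ range N, u (n + k) * conj (u n)‖)
      (fun _ _ => norm_nonneg _) hmem
    linarith

lemma sum_norm_sq_window_le (hu : ∀ n, ‖u n‖ ≤ 1) (H N : ℕ) :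
    ∑ n ∈ range N, ‖∑ d ∈ range H, u (n + d)‖ ^ 2
      ≤ H * N + H ^ 2 * (∑ k ∈ Ico 1 H, ‖∑ n ∈ range N, u (n + k) * conj (u n)‖ + 2 * H) := by
  set corr := ∑ k ∈ Ico 1 H, ‖∑ n ∈ range N, u (n + k) * conj (u n)‖
  have hexpand : ((∑ n ∈ range N, ‖∑ d ∈ range H, u (n + d)‖ ^ 2 : ℝ) : ℂ)
      = ∑ d₁ ∈ range H, ∑ d₂ ∈ range H, ∑ n ∈ range N, u (n + d₁) * conj (u (n + d₂)) := by
    push_cast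
    simp_rw [← Complex.mul_conj', map_sum, sum_mul_sum]
    rw [sum_comm]
    exact sum_congr rfl fun _ _ => sum_comm
  calc ∑ n ∈ range N, ‖∑ d ∈ range H, u (n + d)‖ ^ 2
      = ‖((∑ n ∈ range N, ‖∑ d ∈ range H, u (n + d)‖ ^ 2 : ℝ) : ℂ)‖ := by
        rw [Complex.norm_real, Real.norm_of_nonneg (by positivity)]
    _ ≤ ∑ d₁ ∈ range H, ∑ d₂ ∈ range H, ((if d₁ = d₂ then (N : ℝ) else 0) + (corr + 2 * H)) := by
        rw [hexpand]
        refine (norm_sum_le _ _).trans (sum_le_sum fun d₁ hd₁ => ?_)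
        refine (norm_sum_le _ _).trans (sum_le_sum fun d₂ hd₂ => ?_)
        exact norm_sum_mul_conj_le_sum_correlations hu H N (mem_range.mp hd₁) (mem_range.mp hd₂)
    _ = H * N + H ^ 2 * (corr + 2 * H) := by
        simp only [sum_add_distrib, sum_ite_eq, mem_range, sum_const, card_range, nsmul_eq_mul]
        rw [sum_ite_of_true fun _ h => mem_range.mp h]
        simp only [sum_const, card_range, nsmul_eq_mul]
        ring

lemma norm_average_le_vanDerCorput (hu : ∀ n, ‖u n‖ ≤ 1) {H N : ℕ} (hH : 0 < H) (hN : 0 < N) :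
    ‖(N : ℂ)⁻¹ * ∑ n ∈ range N, u n‖
      ≤ 2 * H / N + √(1 / H + 2 * H / N
        + ∑ k ∈ Ico 1 H, ‖(N : ℂ)⁻¹ * ∑ n ∈ range N, u (n + k) * conj (u n)‖) := by
  set S := ∑ n ∈ range N, u n
  set T := ∑ n ∈ range N, ∑ d ∈ range H, u (n + d)
  set corr := ∑ k ∈ Ico 1 H, ‖∑ n ∈ range N, u (n + k) * conj (u n)‖
  have hH' : (0 : ℝ) < H := Nat.cast_pos.mpr hH
  have hN' : (0 : ℝ) < N := Nat.cast_pos.mpr hN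
  have hnorm : ∀ z : ℂ, ‖(N : ℂ)⁻¹ * z‖ = ‖z‖ / N := fun z => by
    rw [norm_mul, norm_inv, Complex.norm_natCast, inv_mul_eq_div]
  have hcorr : ∑ k ∈ Ico 1 H, ‖(N : ℂ)⁻¹ * ∑ n ∈ range N, u (n + k) * conj (u n)‖ = corr / N := by
    simp only [hnorm, corr, sum_div]
  have hST : H * ‖S‖ ≤ 2 * H ^ 2 + ‖T‖ := by
    have := norm_natCast_mul_sum_sub_sum_window_le hu H N
    have hHS : ‖(H : ℂ) * S‖ = H * ‖S‖ := by rw [norm_mul, Complex.norm_natCast]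
    linarith [norm_le_norm_sub_add ((H : ℂ) * S) T]
  have hCS : ‖T‖ ^ 2 ≤ N * ∑ n ∈ range N, ‖∑ d ∈ range H, u (n + d)‖ ^ 2 := by
    calc ‖T‖ ^ 2 ≤ (∑ n ∈ range N, ‖∑ d ∈ range H, u (n + d)‖) ^ 2 := by
          gcongr; exact norm_sum_le _ _
      _ ≤ _ := by simpa using sq_sum_le_card_mul_sum_sq (s := range N)
  have hT : ‖T‖ / (H * N) ≤ √(1 / H + 2 * H / N + corr / N) := by
    apply Real.le_sqrt_of_sq_le
    rw [div_pow, div_le_iff₀ (by positivity)]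
    calc ‖T‖ ^ 2 ≤ N * (H * N + H ^ 2 * (corr + 2 * H)) :=
          hCS.trans (mul_le_mul_of_nonneg_left (sum_norm_sq_window_le hu H N) hN'.le)
      _ = (1 / H + 2 * H / N + corr / N) * (H * N) ^ 2 := by field_simp; ring
  rw [hnorm, hcorr]
  calc ‖S‖ / N = H * ‖S‖ / (H * N) := by field_simp
    _ ≤ (2 * H ^ 2 + ‖T‖) / (H * N) := by gcongr
    _ = 2 * H / N + ‖T‖ / (H * N) := by field_simp
    _ ≤ _ := by gcongr

theorem tendsto_average_of_tendsto_average_mul_conj (hu : ∀ n, ‖u n‖ ≤ 1)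
    (hcorr : ∀ k, 0 < k → Tendsto (fun N : ℕ => (N : ℂ)⁻¹ * ∑ n ∈ range N, u (n + k) * conj (u n))
      atTop (𝓝 0)) :
    Tendsto (fun N : ℕ => (N : ℂ)⁻¹ * ∑ n ∈ range N, u n) atTop (𝓝 0) := by
  rw [tendsto_zero_iff_norm_tendsto_zero]
  refine tendsto_order.2 ⟨fun a ha => .of_forall fun N => ha.trans_le (norm_nonneg _),
    fun ε hε => ?_⟩
  obtain ⟨H, hHε, hH⟩ : ∃ H : ℕ, √(1 / H) < ε ∧ 0 < H := by
    have : Tendsto (fun H : ℕ => √(1 / (H : ℝ))) atTop (𝓝 0) := by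
      simpa using tendsto_one_div_atTop_nhds_zero_nat.sqrt
    exact ((this.eventually (gt_mem_nhds hε)).and (eventually_gt_atTop 0)).exists
  have hbound : Tendsto (fun N : ℕ => 2 * H / N + √(1 / H + 2 * H / N
      + ∑ k ∈ Ico 1 H, ‖(N : ℂ)⁻¹ * ∑ n ∈ range N, u (n + k) * conj (u n)‖))
      atTop (𝓝 (0 + √(1 / H + 0 + ∑ k ∈ Ico 1 H, ‖(0 : ℂ)‖))) :=
    (tendsto_const_div_atTop_nhds_zero_nat _).add
      ((tendsto_const_nhds.add (tendsto_const_div_atTop_nhds_zero_nat _)).add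
        (tendsto_finsetSum _ fun k hk => (hcorr k (mem_Ico.mp hk).1).norm)).sqrt
  rw [norm_zero, sum_const_zero, add_zero, add_zero, zero_add] at hbound
  filter_upwards [hbound.eventually (gt_mem_nhds hHε), eventually_gt_atTop 0] with N hN hN₀
  exact (norm_average_le_vanDerCorput hu hH hN₀).trans_lt hN

end VanDerCorput

section TaylorDifference

variable {R : Type*} [CommRing R]

lemma coeff_taylor_natDegree_sub_one (f : R[X]) (r : R) :
    (taylor r f).coeff (f.natDegree - 1)
      = f.coeff (f.natDegree - 1) + f.natDegree * f.leadingCoeff * r := by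
  have hlin : (hasseDeriv (f.natDegree - 1) f).natDegree ≤ 1 :=
    (natDegree_hasseDeriv_le _ _).trans (by omega)
  rw [taylor_coeff, eq_X_add_C_of_natDegree_le_one hlin]
  simp only [hasseDeriv_coeff, eval_add, eval_mul, eval_C, eval_X, zero_add, Nat.choose_self,
    Nat.cast_one, one_mul]
  rcases Nat.eq_zero_or_pos f.natDegree with h0 | hpos
  · rw [h0, coeff_eq_zero_of_natDegree_lt (by omega : f.natDegree < 1 + (0 - 1))]
    simp
  · rw [show 1 + (f.natDegree - 1) = f.natDegree by omega, Nat.choose_symm hpos,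
      Nat.choose_one_right, leadingCoeff]
    ring

variable [IsDomain R] [CharZero R]

lemma natDegree_taylor_sub_self {f : R[X]} (hf : 0 < f.natDegree) {r : R} (hr : r ≠ 0) :
    (taylor r f - f).natDegree = f.natDegree - 1 := by
  have hf0 : f ≠ 0 := ne_zero_of_natDegree_gt hf
  have hcoeff : (taylor r f - f).coeff (f.natDegree - 1) = f.natDegree * f.leadingCoeff * r := by
    rw [coeff_sub, coeff_taylor_natDegree_sub_one, add_sub_cancel_left]
  have hne : (f.natDegree : R) * f.leadingCoeff * r ≠ 0 :=
    mul_ne_zero (mul_ne_zero (Nat.cast_ne_zero.mpr hf.ne') (leadingCoeff_ne_zero.mpr hf0)) hr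
  have hlt : (taylor r f - f).degree < f.degree := degree_taylor f r ▸
    degree_sub_lt_left (degree_taylor f r) (by simpa using hf0) (leadingCoeff_taylor _ _)
  have hsub0 : taylor r f - f ≠ 0 := fun h => hne (by rw [← hcoeff, h, coeff_zero])
  have := natDegree_lt_natDegree hsub0 hlt
  exact le_antisymm (by omega) (le_natDegree_of_ne_zero (hcoeff ▸ hne))

lemma leadingCoeff_taylor_sub_self {f : R[X]} (hf : 0 < f.natDegree) {r : R} (hr : r ≠ 0) :
    (taylor r f - f).leadingCoeff = f.natDegree * f.leadingCoeff * r := by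
  rw [leadingCoeff, natDegree_taylor_sub_self hf hr, coeff_sub, coeff_taylor_natDegree_sub_one,
    add_sub_cancel_left]

end TaylorDifference

lemma norm_sum_range_pow_le {z : ℂ} (hz : ‖z‖ = 1) (hz₁ : z ≠ 1) (N : ℕ) :
    ‖∑ n ∈ range N, z ^ n‖ ≤ 2 / ‖z - 1‖ := by
  rw [geom_sum_eq hz₁, norm_div]
  gcongr
  calc ‖z ^ N - 1‖ ≤ ‖z ^ N‖ + ‖(1 : ℂ)‖ := norm_sub_le _ _
    _ = 2 := by rw [norm_pow, hz, one_pow, norm_one]; norm_num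

lemma Irrational.fourierChar_ne_one {a : ℝ} (ha : Irrational a) : 𝐞 a ≠ 1 := by
  rw [Real.fourierChar_apply', Ne, Circle.exp_eq_one]
  rintro ⟨n, hn⟩
  refine ha.ne_int n (mul_left_cancel₀ (by positivity : 2 * π ≠ 0) ?_)
  rw [hn]
  ring

theorem tendsto_average_fourierChar_eval {f : ℝ[X]} (hf : 0 < f.natDegree)
    (hirr : Irrational f.leadingCoeff) :
    Tendsto (fun N : ℕ => (N : ℂ)⁻¹ * ∑ n ∈ range N, (𝐞 (f.eval (n : ℝ)) : ℂ)) atTop (𝓝 0) := by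
  obtain ⟨d, hd⟩ : ∃ d, f.natDegree = d + 1 := ⟨_, (Nat.succ_pred_eq_of_pos hf).symm⟩
  induction d generalizing f with
  | zero =>
    set z : ℂ := (𝐞 f.leadingCoeff : ℂ)
    have hz₁ : z ≠ 1 := by simpa [z, Circle.coe_eq_one] using hirr.fourierChar_ne_one
    have hterm : ∀ n : ℕ, (𝐞 (f.eval (n : ℝ)) : ℂ) = 𝐞 (f.coeff 0) * z ^ n := fun n => by
      have heval : f.eval (n : ℝ) = f.coeff 0 + n • f.leadingCoeff := by
        conv_lhs => rw [eq_X_add_C_of_natDegree_le_one hd.le]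
        rw [leadingCoeff, hd, eval_add, eval_mul, eval_C, eval_X, eval_C, nsmul_eq_mul]
        ring
      rw [heval, AddChar.map_add_eq_mul, AddChar.map_nsmul_eq_pow, Circle.coe_mul, Circle.coe_pow]
    simp_rw [hterm, ← mul_sum]
    refine tendsto_inv_atTop_nhds_zero_nat.zero_mul_isBoundedUnder_le
      (isBoundedUnder_of ⟨2 / ‖z - 1‖, fun N => ?_⟩)
    simpa [Circle.norm_coe] using norm_sum_range_pow_le (Circle.norm_coe _) hz₁ N
  | succ d ih =>
    refine tendsto_average_of_tendsto_average_mul_conj (fun n => (Circle.norm_coe _).le)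
      fun k hk => ?_
    have hk' : (k : ℝ) ≠ 0 := by positivity
    have hdeg := natDegree_taylor_sub_self hf hk'
    have hlead := leadingCoeff_taylor_sub_self hf hk'
    rw [hd] at hdeg hlead
    refine (ih (by omega) ?_ hdeg).congr fun N => ?_
    · rw [hlead, mul_right_comm]
      exact_mod_cast hirr.natCast_mul (by positivity)
    · congr 1
      refine sum_congr rfl fun n _ => ?_
      rw [Circle.starRingEnd_addChar, ← Circle.coe_mul, ← AddChar.map_add_eq_mul, eval_sub,
        taylor_eval]
      push_cast
      ring_nf

lemma tendsto_average_fourierChar_mul_eval_add_sub_eval {p : ℤ[X]} (hp : 2 ≤ p.natDegree) {h : ℕ}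
    (hh : 0 < h) {x : ℝ} (hx : Irrational x) :
    Tendsto (fun N : ℕ => (N : ℂ)⁻¹ * ∑ n ∈ range N,
      (𝐞 (-((p.eval ((n + h : ℕ) : ℤ) - p.eval (n : ℤ) : ℤ) : ℝ) * x) : ℂ)) atTop (𝓝 0) := by
  set P : ℝ[X] := p.map (Int.castRingHom ℝ)
  have hP : P.natDegree = p.natDegree := natDegree_map_eq_of_injective (RingHom.injective_int _) p
  have hh' : (h : ℝ) ≠ 0 := by positivity
  have hx₀ : -x ≠ 0 := neg_ne_zero.mpr hx.ne_zero
  have hdeg : (C (-x) * (taylor (h : ℝ) P - P)).natDegree = p.natDegree - 1 := by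
    rw [natDegree_C_mul hx₀, natDegree_taylor_sub_self (by omega) hh', hP]
  have hlead : (C (-x) * (taylor (h : ℝ) P - P)).leadingCoeff
      = ((-(p.natDegree * p.leadingCoeff * h) : ℤ) : ℝ) * x := by
    rw [leadingCoeff_mul, leadingCoeff_C, leadingCoeff_taylor_sub_self (by omega) hh', hP,
      leadingCoeff_map_of_injective (RingHom.injective_int _), eq_intCast]
    push_cast
    ring
  have hlc : p.leadingCoeff ≠ 0 := leadingCoeff_ne_zero.mpr (ne_zero_of_natDegree_gt hp)
  refine (tendsto_average_fourierChar_eval (f := C (-x) * (taylor (h : ℝ) P - P))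
    (by omega) ?_).congr fun N => ?_
  · rw [hlead]
    exact hx.intCast_mul (by simp [hlc, hh.ne']; omega)
  · congr 1
    refine sum_congr rfl fun n _ => ?_
    congr 3
    rw [eval_mul, eval_C, eval_sub, taylor_eval, ← Int.cast_natCast, ← Int.cast_natCast h,
      ← Int.cast_add, eval_intCast_map, eval_intCast_map]
    simp only [eq_intCast]
    push_cast
    ring

section MeasurePreserving

variable {X : Type*} [MeasurableSpace X] {μ : Measure X} {S : X ≃ᵐ X}

lemma MeasureTheory.MeasurePreserving.toEquiv_zpow (hS : MeasurePreserving S μ μ) :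
    ∀ k : ℤ, MeasurePreserving ⇑(S.toEquiv ^ k) μ μ
  | (n : ℕ) => by simpa [Equiv.Perm.coe_pow] using hS.iterate n
  | .negSucc n => by
    rw [zpow_negSucc, ← inv_pow, Equiv.Perm.coe_pow]
    exact (hS.symm S).iterate (n + 1)

lemma MeasureTheory.MeasurePreserving.integral_mul_conj_toEquiv_zpow
    (hS : MeasurePreserving S μ μ) (g : X → ℂ) (a b : ℤ) :
    ∫ x, g ((S.toEquiv ^ a) x) * conj (g ((S.toEquiv ^ b) x)) ∂μ
      = ∫ x, g ((S.toEquiv ^ (a - b)) x) * conj (g x) ∂μ := by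
  let T : X ≃ᵐ X := ⟨S.toEquiv ^ b, (hS.toEquiv_zpow b).measurable, by
    rw [← Equiv.Perm.inv_def, ← zpow_neg]; exact (hS.toEquiv_zpow (-b)).measurable⟩
  rw [← MeasurePreserving.integral_comp' (f := T) (hS.toEquiv_zpow b)
    (fun y => g ((S.toEquiv ^ (a - b)) y) * conj (g y))]
  congr 1 with x
  change _ = g ((S.toEquiv ^ (a - b) * S.toEquiv ^ b) x) * conj (g ((S.toEquiv ^ b) x))
  rw [← zpow_add, sub_add_cancel]

end MeasurePreserving

lemma norm_inv_natCast_mul_sum_le {u : ℕ → ℂ} {C : ℝ} (hu : ∀ n, ‖u n‖ ≤ C) (N : ℕ) :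
    ‖(N : ℂ)⁻¹ * ∑ n ∈ range N, u n‖ ≤ C := by
  rcases N.eq_zero_or_pos with rfl | hN
  · simpa using (norm_nonneg _).trans (hu 0)
  have hN' : (0 : ℝ) < N := Nat.cast_pos.mpr hN
  calc ‖(N : ℂ)⁻¹ * ∑ n ∈ range N, u n‖ ≤ (N : ℝ)⁻¹ * ∑ _n ∈ range N, C := by
        rw [norm_mul, norm_inv, Complex.norm_natCast]
        gcongr
        exact norm_sum_le_of_le _ fun n _ => hu n
    _ = C := by rw [sum_const, card_range, nsmul_eq_mul, inv_mul_cancel_left₀ hN'.ne']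

lemma tendsto_average_integral_of_ae_tendsto_average {α : Type*} [MeasurableSpace α]
    {ν : Measure α} [IsFiniteMeasure ν] {u : ℕ → α → ℂ} {C : ℝ}
    (hmeas : ∀ n, AEStronglyMeasurable (u n) ν) (hbound : ∀ n x, ‖u n x‖ ≤ C)
    (hlim : ∀ᵐ x ∂ν, Tendsto (fun N : ℕ => (N : ℂ)⁻¹ * ∑ n ∈ range N, u n x) atTop (𝓝 0)) :
    Tendsto (fun N : ℕ => (N : ℂ)⁻¹ * ∑ n ∈ range N, ∫ x, u n x ∂ν) atTop (𝓝 0) := by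
  have hint : ∀ n, Integrable (u n) ν := fun n =>
    .mono' (integrable_const C) (hmeas n) (.of_forall (hbound n))
  have hswap : ∀ N : ℕ, (N : ℂ)⁻¹ * ∑ n ∈ range N, ∫ x, u n x ∂ν
      = ∫ x, (N : ℂ)⁻¹ * ∑ n ∈ range N, u n x ∂ν := fun N => by
    rw [integral_const_mul, integral_finsetSum _ fun n _ => hint n]
  simp_rw [hswap]
  have hmeas' : ∀ N : ℕ, AEStronglyMeasurable (fun x => (N : ℂ)⁻¹ * ∑ n ∈ range N, u n x) ν :=
    fun N => (Finset.aestronglyMeasurable_fun_sum _ fun n _ => hmeas n).const_mul _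
  have := tendsto_integral_of_dominated_convergence (fun _ => C) hmeas' (integrable_const C)
    (fun N => .of_forall fun x => norm_inv_natCast_mul_sum_le (hbound · x) N) hlim
  rwa [integral_zero] at this

lemma coe_fourierChar_neg_intCast_mul (m : ℤ) (x : ℝ) :
    (𝐞 (-m * x) : ℂ) = Complex.exp (-2 * π * Complex.I * m * x) := by
  rw [Real.fourierChar_apply]
  push_cast
  ring_nf

theorem polynomial_correlations_vanish_general {X : Type*} [MeasurableSpace X]
    (μ : Measure X) (S : X ≃ᵐ X)
    (hS : MeasurePreserving S μ μ)
    (g : X → ℂ)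
    (ν : Measure ℝ) [IsFiniteMeasure ν]
    (hcoeff : ∀ n : ℤ, ∫ x : ℝ, Complex.exp (-2 * Real.pi * Complex.I * n * (x : ℂ)) ∂ν =
      ∫ x, g ((S.toEquiv ^ n) x) * (starRingEnd ℂ) (g x) ∂μ)
    (hrat : ν {x : ℝ | ∃ q : ℚ, (q : ℝ) = x} = 0)
    (p : Polynomial ℤ) (hdeg : 2 ≤ p.natDegree) :
    ∀ h : ℕ, 0 < h → Tendsto (fun N : ℕ =>
        (1 / (N : ℂ)) * ∑ n ∈ Finset.range N,
          ∫ x, g ((S.toEquiv ^ (p.eval ((n + 1 + h : ℕ) : ℤ))) x) *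
            (starRingEnd ℂ) (g ((S.toEquiv ^ (p.eval ((n + 1 : ℕ) : ℤ))) x)) ∂μ)
      atTop (nhds 0) := by
  intro h hh
  have hshift : ∀ n : ℕ, p.eval ((n + 1 + h : ℕ) : ℤ) - p.eval ((n + 1 : ℕ) : ℤ)
      = (taylor 1 p).eval ((n + h : ℕ) : ℤ) - (taylor 1 p).eval (n : ℤ) := fun n => by
    simp only [taylor_eval]
    push_cast
    ring_nf
  have hspectral : ∀ n : ℕ,
      ∫ x, g ((S.toEquiv ^ (p.eval ((n + 1 + h : ℕ) : ℤ))) x) *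
        conj (g ((S.toEquiv ^ (p.eval ((n + 1 : ℕ) : ℤ))) x)) ∂μ
      = ∫ x : ℝ, (𝐞 (-(((taylor 1 p).eval ((n + h : ℕ) : ℤ) - (taylor 1 p).eval (n : ℤ) : ℤ) : ℝ)
          * x) : ℂ) ∂ν := fun n => by
    simp_rw [hS.integral_mul_conj_toEquiv_zpow, hshift, ← hcoeff, coe_fourierChar_neg_intCast_mul]
  have hirr : ∀ᵐ x ∂ν, Irrational x := by
    simpa [ae_iff, Irrational] using hrat
  simp_rw [hspectral, one_div]
  refine tendsto_average_integral_of_ae_tendsto_average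
    (fun n => Continuous.aestronglyMeasurable (by fun_prop)) (fun n x => (Circle.norm_coe _).le) ?_
  filter_upwards [hirr] with x hx
  exact tendsto_average_fourierChar_mul_eval_add_sub_eval (by rwa [natDegree_taylor]) hh hx

/-- For a totally ergodic invertible measure preserving transformation `S` and `g ∈ L²`
whose spectral measure has no rational atoms (equivalently `E[g|I_S] = 0` and
`E[g|K_rat(S)] = 0`), the polynomial correlation averages vanish for every `h ≥ 1`,
where `p ∈ ℤ[x]` has degree at least `2`. -/
theorem polynomial_correlations_vanish {X : Type*} [MeasurableSpace X]
    (μ : Measure X) [IsProbabilityMeasure μ] (S : X ≃ᵐ X)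
    (hS : MeasurePreserving S μ μ)
    (hte : ∀ m : ℕ, 0 < m → Ergodic ((⇑S)^[m]) μ)
    (g : X → ℂ) (hg : MemLp g 2 μ)
    (ν : Measure ℝ) [IsFiniteMeasure ν] (hsupp : ν (Set.Ico (0 : ℝ) 1)ᶜ = 0)
    (hcoeff : ∀ n : ℤ, ∫ x : ℝ, Complex.exp (-2 * Real.pi * Complex.I * n * (x : ℂ)) ∂ν =
      ∫ x, g ((S.toEquiv ^ n) x) * (starRingEnd ℂ) (g x) ∂μ)
    (hrat : ν {x : ℝ | ∃ q : ℚ, (q : ℝ) = x} = 0)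
    (p : Polynomial ℤ) (hdeg : 2 ≤ p.natDegree) :
    ∀ h : ℕ, 0 < h → Tendsto (fun N : ℕ =>
        (1 / (N : ℂ)) * ∑ n ∈ Finset.range N,
          ∫ x, g ((S.toEquiv ^ (p.eval ((n + 1 + h : ℕ) : ℤ))) x) *
            (starRingEnd ℂ) (g ((S.toEquiv ^ (p.eval ((n + 1 : ℕ) : ℤ))) x)) ∂μ)
      atTop (nhds 0) :=
  polynomial_correlations_vanish_general μ S hS g ν hcoeff hrat p hdeg
end

section
/- Let (X, B, μ) be a probability space and T, S : X → X measure preserving transformations (not necessarily commuting). Then for every bounded nonnegative f ∈ L²(X, μ), ∫_X f · E[f | I_T] · E[f | I_S] dμ ≥ (∫_X f dμ)³. -/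
open MeasureTheory Filter

/-- The σ-algebra of sets invariant under a self-map `T`. -/
def invariantSigmaAlgebra {X : Type*} [m0 : MeasurableSpace X] (T : X → X) :
    MeasurableSpace X where
  MeasurableSet' s := MeasurableSet s ∧ T ⁻¹' s = s
  measurableSet_empty := ⟨MeasurableSet.empty, rfl⟩
  measurableSet_compl := fun s hs => ⟨hs.1.compl, by rw [Set.preimage_compl, hs.2]⟩
  measurableSet_iUnion := fun s hs =>
    ⟨MeasurableSet.iUnion fun i => (hs i).1, by
      simp only [Set.preimage_iUnion]
      exact Set.iUnion_congr fun i => (hs i).2⟩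

open scoped ENNReal

/-!
Write `g = E[f|I_T]`, `h = E[f|I_S]` and `m = ∫ f`. Pulling `h` out of the conditional
expectation and then using the conditional Cauchy–Schwarz inequality
`E[f √g | I_S]² ≤ E[f | I_S] · E[f g | I_S]` gives
`∫ f g h = ∫ h · E[f g | I_S] ≥ ∫ E[f √g | I_S]² ≥ (∫ f √g)² = (∫ g^{3/2})²`,
and Jensen's inequality for `t ↦ t^{3/2}` bounds the last term below by `m³`.
-/

lemma sq_le_mul_of_forall_rat_quadratic_nonneg {a b c : ℝ}
    (h : ∀ q : ℚ, 0 ≤ a * (q : ℝ) ^ 2 - 2 * b * q + c) : b ^ 2 ≤ a * c := by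
  have hreal : ∀ x : ℝ, 0 ≤ a * x ^ 2 - 2 * b * x + c := fun x =>
    Rat.denseRange_cast.induction_on x (isClosed_le continuous_const (by fun_prop)) h
  have := discrim_le_zero (a := a) (b := -(2 * b)) (c := c) fun x => by nlinarith [hreal x]
  rw [discrim] at this
  nlinarith

lemma sqrt_mul_self_tangent_le {t m : ℝ} (ht : 0 ≤ t) (hm : 0 ≤ m) :
    √m * m + 3 / 2 * √m * (t - m) ≤ √t * t := by
  obtain ⟨s, hs, rfl⟩ : ∃ s, 0 ≤ s ∧ t = s ^ 2 :=
    ⟨√t, Real.sqrt_nonneg t, (Real.sq_sqrt ht).symm⟩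
  obtain ⟨r, hr, rfl⟩ : ∃ r, 0 ≤ r ∧ m = r ^ 2 :=
    ⟨√m, Real.sqrt_nonneg m, (Real.sq_sqrt hm).symm⟩
  rw [Real.sqrt_sq hs, Real.sqrt_sq hr]
  nlinarith [mul_nonneg (sq_nonneg (s - r)) (by positivity : 0 ≤ 2 * s + r)]

lemma sqrt_le_one_add {t : ℝ} (ht : 0 ≤ t) : √t ≤ 1 + t :=
  Real.sqrt_le_iff.2 ⟨by linarith, by nlinarith⟩

section

variable {X : Type*} {m mA mB m0 : MeasurableSpace X} {μ : Measure X}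

lemma sq_integral_le_integral_sq [IsProbabilityMeasure μ] {u : X → ℝ} (hu : MemLp u 2 μ) :
    (∫ x, u x ∂μ) ^ 2 ≤ ∫ x, u x ^ 2 ∂μ := by
  have := ProbabilityTheory.variance_nonneg u μ
  rw [ProbabilityTheory.variance_eq_sub hu] at this
  simpa using this

lemma MeasureTheory.MemLp.sqrt [IsFiniteMeasure μ] {p : ℝ≥0∞} {g : X → ℝ}
    (hg : MemLp g p μ) (hg_nonneg : 0 ≤ᵐ[μ] g) : MemLp (fun x => √(g x)) p μ := by
  refine ((memLp_const (1 : ℝ)).add hg).of_le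
    (Real.continuous_sqrt.comp_aestronglyMeasurable hg.1) ?_
  filter_upwards [hg_nonneg] with x hx
  have h1 : 0 ≤ 1 + g x := by simp only [Pi.zero_apply] at hx; linarith
  rw [Pi.add_apply, Real.norm_of_nonneg (Real.sqrt_nonneg _), Real.norm_of_nonneg h1]
  exact sqrt_le_one_add hx

lemma integral_pow_three_le_sq_integral_sqrt_mul [IsProbabilityMeasure μ] {g : X → ℝ}
    (hg : Integrable g μ) (hg_nonneg : 0 ≤ᵐ[μ] g)
    (hgg : Integrable (fun x => √(g x) * g x) μ) :
    (∫ x, g x ∂μ) ^ 3 ≤ (∫ x, √(g x) * g x ∂μ) ^ 2 := by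
  set a := ∫ x, g x ∂μ
  have ha : 0 ≤ a := integral_nonneg_of_ae hg_nonneg
  have htangent : ∀ᵐ x ∂μ, √a * a + 3 / 2 * √a * (g x - a) ≤ √(g x) * g x := by
    filter_upwards [hg_nonneg] with x hx
    exact sqrt_mul_self_tangent_le hx ha
  have hlin : Integrable (fun x => 3 / 2 * √a * (g x - a)) μ :=
    (hg.sub (integrable_const a)).const_mul _
  have hjensen : √a * a ≤ ∫ x, √(g x) * g x ∂μ :=
    calc √a * a = ∫ x, (√a * a + 3 / 2 * √a * (g x - a)) ∂μ := by
          rw [integral_add (integrable_const _) hlin, integral_const_mul (3 / 2 * √a),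
            integral_sub hg (integrable_const a)]
          simp [a]
      _ ≤ ∫ x, √(g x) * g x ∂μ :=
          integral_mono_ae ((integrable_const _).add hlin) hgg htangent
  calc a ^ 3 = (√a * a) ^ 2 := by rw [mul_pow, Real.sq_sqrt ha]; ring
    _ ≤ _ := pow_le_pow_left₀ (by positivity) hjensen 2

lemma integral_mul_condExp_of_stronglyMeasurable (hm : m ≤ m0) [SigmaFinite (μ.trim hm)]
    {φ ψ : X → ℝ} (hφ : StronglyMeasurable[m] φ) (hφψ : Integrable (φ * ψ) μ)
    (hψ : Integrable ψ μ) :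
    ∫ x, φ x * (μ[ψ|m]) x ∂μ = ∫ x, φ x * ψ x ∂μ :=
  (integral_congr_ae (condExp_mul_of_stronglyMeasurable_left hφ hφψ hψ)).symm.trans
    (integral_condExp hm)

lemma sq_condExp_mul_le_condExp_mul_condExp {w s : X → ℝ} (hw : 0 ≤ᵐ[μ] w)
    (hw_int : Integrable w μ) (hsw : Integrable (s * w) μ) (hssw : Integrable (s ^ 2 * w) μ) :
    ∀ᵐ x ∂μ, (μ[s * w|m] x) ^ 2 ≤ μ[w|m] x * μ[s ^ 2 * w|m] x := by
  -- Over `ℚ` the family of a.e. inequalities is countable, so they hold simultaneously a.e.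
  have hquadratic : ∀ q : ℚ, ∀ᵐ x ∂μ,
      0 ≤ μ[w|m] x * (q : ℝ) ^ 2 - 2 * μ[s * w|m] x * q + μ[s ^ 2 * w|m] x := by
    intro q
    have hexpand : (fun x => (s x - q) ^ 2 * w x)
        = s ^ 2 * w - (2 * (q : ℝ)) • (s * w) + ((q : ℝ) ^ 2) • w := by
      ext x
      simp only [Pi.add_apply, Pi.sub_apply, Pi.smul_apply, Pi.mul_apply, Pi.pow_apply,
        smul_eq_mul]
      ring
    have hnonneg : 0 ≤ᵐ[μ] μ[fun x => (s x - q) ^ 2 * w x|m] :=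
      condExp_nonneg (by filter_upwards [hw] with x hx using mul_nonneg (sq_nonneg _) hx)
    rw [hexpand] at hnonneg
    filter_upwards [hnonneg,
      condExp_add (hssw.sub (hsw.smul (2 * (q : ℝ)))) (hw_int.smul ((q : ℝ) ^ 2)) m,
      condExp_sub hssw (hsw.smul (2 * (q : ℝ))) m, condExp_smul (2 * (q : ℝ)) (s * w) m,
      condExp_smul ((q : ℝ) ^ 2) w m] with x h0 h1 h2 h3 h4
    simp only [Pi.zero_apply, Pi.add_apply, Pi.sub_apply, Pi.smul_apply, smul_eq_mul]
      at h0 h1 h2 h3 h4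
    linarith
  filter_upwards [ae_all_iff.2 hquadratic] with x hx
  exact sq_le_mul_of_forall_rat_quadratic_nonneg hx

theorem integral_cube_le_integral_mul_condExp_mul_condExp [IsProbabilityMeasure μ]
    (hmA : mA ≤ m0) (hmB : mB ≤ m0) {f : X → ℝ} (hf : MemLp f ∞ μ)
    (hf_nonneg : 0 ≤ᵐ[μ] f) :
    (∫ x, f x ∂μ) ^ 3 ≤ ∫ x, f x * μ[f|mA] x * μ[f|mB] x ∂μ := by
  set g := μ[f|mA]
  set h := μ[f|mB]
  set s : X → ℝ := fun x => √(g x)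
  set u := μ[s * f|mB]
  have hg : MemLp g ∞ μ := hf.condExp le_top
  have hg_nonneg : 0 ≤ᵐ[μ] g := condExp_nonneg hf_nonneg
  have hs_meas : StronglyMeasurable[mA] s :=
    Real.continuous_sqrt.comp_stronglyMeasurable stronglyMeasurable_condExp
  have hs : MemLp s ∞ μ := hg.sqrt hg_nonneg
  have hs_sq : s ^ 2 * f =ᵐ[μ] g * f := by
    filter_upwards [hg_nonneg] with x hx
    simp [s, Real.sq_sqrt hx]
  have hh : MemLp h ∞ μ := hf.condExp le_top
  have hgf : MemLp (g * f) ∞ μ := hf.mul hg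
  have hsf : MemLp (s * f) ∞ μ := hf.mul hs
  have hu : MemLp u ∞ μ := hsf.condExp le_top
  have hcauchy_schwarz : ∀ᵐ x ∂μ, u x ^ 2 ≤ h x * μ[g * f|mB] x := by
    filter_upwards [sq_condExp_mul_le_condExp_mul_condExp hf_nonneg (hf.integrable le_top)
      (hsf.integrable le_top) ((hgf.integrable le_top).congr hs_sq.symm),
      condExp_congr_ae (m := mB) hs_sq] with x hx hsq_eq
    rwa [← hsq_eq]
  calc (∫ x, f x ∂μ) ^ 3 = (∫ x, g x ∂μ) ^ 3 := by rw [integral_condExp hmA]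
    _ ≤ (∫ x, s x * g x ∂μ) ^ 2 := integral_pow_three_le_sq_integral_sqrt_mul
        (hg.integrable le_top) hg_nonneg ((hg.mul hs).integrable le_top)
    _ = (∫ x, u x ∂μ) ^ 2 := by
        rw [integral_condExp hmB, integral_mul_condExp_of_stronglyMeasurable hmA hs_meas
          (hsf.integrable le_top) (hf.integrable le_top)]
        rfl
    _ ≤ ∫ x, u x ^ 2 ∂μ := sq_integral_le_integral_sq (hu.mono_exponent le_top)
    _ ≤ ∫ x, h x * μ[g * f|mB] x ∂μ := integral_mono_ae
        (hu.mono_exponent le_top).integrable_sq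
        (((hgf.condExp le_top).mul hh).integrable le_top) hcauchy_schwarz
    _ = ∫ x, f x * g x * h x ∂μ := by
        rw [integral_mul_condExp_of_stronglyMeasurable hmB stronglyMeasurable_condExp
          ((hgf.mul hh).integrable le_top) (hgf.integrable le_top)]
        congr 1 with x
        simp only [Pi.mul_apply]
        ring

end

lemma invariantSigmaAlgebra_le {X : Type*} [MeasurableSpace X] (T : X → X) :
    invariantSigmaAlgebra T ≤ ‹MeasurableSpace X› :=
  fun _ hs => hs.1

theorem triple_correlation_lower_bound_general {X : Type*} [MeasurableSpace X]
    (μ : Measure X) [IsProbabilityMeasure μ] (T S : X → X)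
    (f : X → ℝ) (hf : MemLp f 2 μ) (hbdd : ∃ C : ℝ, ∀ x, |f x| ≤ C)
    (hnonneg : ∀ x, 0 ≤ f x) :
    (∫ x, f x ∂μ) ^ 3 ≤
      ∫ x, f x * (μ[f|invariantSigmaAlgebra T]) x * (μ[f|invariantSigmaAlgebra S]) x ∂μ := by
  obtain ⟨C, hC⟩ := hbdd
  exact integral_cube_le_integral_mul_condExp_mul_condExp (invariantSigmaAlgebra_le T)
    (invariantSigmaAlgebra_le S) (memLp_top_of_bound hf.aestronglyMeasurable C (ae_of_all _ hC))
    (ae_of_all _ hnonneg)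

/-- Chu's triple-correlation lower bound: for measure preserving `T, S` (not necessarily
commuting) and bounded nonnegative `f ∈ L²`,
`∫ f · E[f|I_T] · E[f|I_S] dμ ≥ (∫ f dμ)³`. -/
theorem triple_correlation_lower_bound {X : Type*} [MeasurableSpace X]
    (μ : Measure X) [IsProbabilityMeasure μ] (T S : X → X)
    (hT : MeasurePreserving T μ μ) (hS : MeasurePreserving S μ μ)
    (f : X → ℝ) (hf : MemLp f 2 μ) (hbdd : ∃ C : ℝ, ∀ x, |f x| ≤ C)
    (hnonneg : ∀ x, 0 ≤ f x) :
    (∫ x, f x ∂μ) ^ 3 ≤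
      ∫ x, f x * (μ[f|invariantSigmaAlgebra T]) x * (μ[f|invariantSigmaAlgebra S]) x ∂μ :=
  triple_correlation_lower_bound_general μ T S f hf hbdd hnonneg
end

section
/- Consider the skew product T(x,y) = (x, y + x) on the torus [0,1)² with Lebesgue measure m², and S(x,y) = (x + 2α, y + x) for irrational α. With f(x,y) = e^{2πi(x−y)}, h(x,y) = e^{2πiy}, g(x,y) = e^{−2πix}, the averages (1/N)∑_{n=1}^N Tⁿf · Sⁿh · S^{(n²−n)/2} g converge in L²(m²) to the constant function 1, which is nonzero even though ∫ g dm² = 0. -/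
open MeasureTheory Filter Finset
open scoped Real

/-- The torus `[0,1)²` realized as a product of unit circles. -/
abbrev Torus : Type := UnitAddCircle × UnitAddCircle

/-- The skew product `T(x,y) = (x, y + x)`. -/
noncomputable def Tskew : Torus → Torus := fun p => (p.1, p.2 + p.1)

/-- The skew product `S(x,y) = (x + 2α, y + x)`. -/
noncomputable def Sskew (α : ℝ) : Torus → Torus :=
  fun p => (p.1 + ((2 * α : ℝ) : UnitAddCircle), p.2 + p.1)

/-- `f(x,y) = e^{2πi(x−y)}`. -/
noncomputable def fEx : Torus → ℂ := fun p => fourier 1 p.1 * fourier (-1) p.2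

/-- `h(x,y) = e^{2πiy}`. -/
noncomputable def hEx : Torus → ℂ := fun p => fourier 1 p.2

/-- `g(x,y) = e^{−2πix}`. -/
noncomputable def gEx : Torus → ℂ := fun p => fourier (-1) p.1

lemma fourier_add_arg (n : ℤ) (x y : UnitAddCircle) :
    fourier n (x + y) = fourier n x * fourier n y := by
  rw [fourier_apply, fourier_apply, fourier_apply, zsmul_add, AddCircle.toCircle_add]
  simp

lemma fourier_ne_zero (n : ℤ) (x : UnitAddCircle) : fourier n x ≠ 0 := by
  rw [fourier_apply]; exact Circle.coe_ne_zero _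

lemma fourier_neg_one_eq (x : UnitAddCircle) :
    fourier (-1) x = (fourier 1 x)⁻¹ := by
  have h : fourier (-1) x * fourier 1 x = 1 := by
    rw [← fourier_add]; norm_num
  field_simp at h ⊢
  linear_combination h

lemma Tskew_iterate (k : ℕ) (p : Torus) :
    Tskew^[k] p = (p.1, p.2 + k • p.1) := by
  induction k with
  | zero => simp
  | succ k ih =>
    rw [Function.iterate_succ_apply', ih, Tskew]
    simp [succ_nsmul]
    abel

lemma Sskew_iterate (α : ℝ) (k : ℕ) (p : Torus) :
    (Sskew α)^[k] p = (p.1 + k • ((2 * α : ℝ) : UnitAddCircle),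
      p.2 + k • p.1 + (k * (k - 1) / 2) • ((2 * α : ℝ) : UnitAddCircle)) := by
  induction k with
  | zero => simp
  | succ k ih =>
    rw [Function.iterate_succ_apply', ih, Sskew]
    simp only [Nat.triangle_succ, succ_nsmul, add_smul, Prod.mk.injEq]
    constructor <;> abel

lemma key_prod (α : ℝ) (n : ℕ) (p : Torus) :
    fEx (Tskew^[n + 1] p) * hEx ((Sskew α)^[n + 1] p) *
      gEx ((Sskew α)^[((n + 1) ^ 2 - (n + 1)) / 2] p) = 1 := by
  have hm : ((n + 1) ^ 2 - (n + 1)) / 2 = (n + 1) * (n + 1 - 1) / 2 := by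
    have : (n + 1) ^ 2 - (n + 1) = (n + 1) * n := by ring_nf; omega
    simp [this]
  rw [hm, Tskew_iterate, Sskew_iterate, Sskew_iterate]
  simp only [fEx, hEx, gEx]
  set x := p.1
  set y := p.2
  set a : UnitAddCircle := ((2 * α : ℝ) : UnitAddCircle)
  set s : UnitAddCircle := (n + 1) • x
  set t : UnitAddCircle := ((n + 1) * (n + 1 - 1) / 2) • a
  simp only [fourier_neg_one_eq, fourier_add_arg]
  have hx := fourier_ne_zero 1 x
  have hy := fourier_ne_zero 1 y
  have hs := fourier_ne_zero 1 s
  have ht := fourier_ne_zero 1 t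
  field_simp

lemma integral_fourier_neg_one :
    ∫ x : UnitAddCircle, fourier (-1) x = 0 := by
  have hvol : (volume : Measure UnitAddCircle) = AddCircle.haarAddCircle := by
    rw [AddCircle.volume_eq_smul_haarAddCircle]
    simp
  rw [hvol]
  have hcoeff := fourierCoeff_eq_intervalIntegral
    (T := 1) (fun _ => (1 : ℂ)) 1 0
  have : fourierCoeff (T := 1) (fun _ => (1 : ℂ)) 1 = 0 := by
    rw [hcoeff]
    simp only [smul_eq_mul, mul_one]
    have hc : (-(2 * (Real.pi : ℂ) * Complex.I)) ≠ 0 := by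
      simp [Real.pi_ne_zero, Complex.I_ne_zero, Complex.ofReal_ne_zero]
    have hpt : ∀ x : ℝ, (fourier (-1) (x : UnitAddCircle) : ℂ) =
        Complex.exp ((-(2 * (Real.pi : ℂ) * Complex.I)) * x) := by
      intro x
      rw [fourier_coe_apply]
      push_cast
      ring_nf
    have : ∫ x in (0:ℝ)..(0+1), (fourier (-1) (x : UnitAddCircle) : ℂ) = 0 := by
      rw [intervalIntegral.integral_congr (fun x _ => hpt x),
        integral_exp_mul_complex hc]
      norm_num [Complex.exp_neg, Complex.exp_two_pi_mul_I]
    simpa using this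
  unfold fourierCoeff at this
  simpa using this

/-- The counterexample: for irrational `α`, the averages
`(1/N) ∑ Tⁿf · Sⁿh · S^{(n²−n)/2} g` converge in `L²(m²)` to the constant `1 ≠ 0`,
even though `∫ g dm² = 0`. -/
theorem skew_product_counterexample (α : ℝ) (hα : Irrational α) :
    (∫ p, gEx p ∂(volume : Measure Torus) = 0) ∧ (1 : ℂ) ≠ 0 ∧
      Tendsto (fun N : ℕ =>
          (eLpNorm (fun p : Torus =>
              (N : ℝ)⁻¹ • ∑ n ∈ Finset.range N,
                (fEx (Tskew^[n + 1] p) * hEx ((Sskew α)^[n + 1] p) *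
                  gEx ((Sskew α)^[((n + 1) ^ 2 - (n + 1)) / 2] p)) - 1)
            2 (volume : Measure Torus)).toReal)
        atTop (nhds 0) := by
  refine ⟨?_, one_ne_zero, ?_⟩
  · have : (∫ p, gEx p ∂(volume : Measure Torus)) =
        (∫ x : UnitAddCircle, fourier (-1) x) * (∫ _ : UnitAddCircle, (1 : ℂ)) := by
      rw [← MeasureTheory.integral_prod_mul (μ := (volume : Measure UnitAddCircle))
        (ν := (volume : Measure UnitAddCircle)) (fun x => (fourier (-1) x : ℂ)) (fun _ => (1:ℂ))]
      simp [gEx]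
      rfl
    rw [this, integral_fourier_neg_one, zero_mul]
  · have heq : ∀ᶠ N : ℕ in atTop, (eLpNorm (fun p : Torus =>
        (N : ℝ)⁻¹ • ∑ n ∈ Finset.range N,
          (fEx (Tskew^[n + 1] p) * hEx ((Sskew α)^[n + 1] p) *
            gEx ((Sskew α)^[((n + 1) ^ 2 - (n + 1)) / 2] p)) - 1)
        2 (volume : Measure Torus)).toReal = 0 := by
      filter_upwards [eventually_ge_atTop 1] with N hN
      have hfun : (fun p : Torus =>
          (N : ℝ)⁻¹ • ∑ n ∈ Finset.range N,
            (fEx (Tskew^[n + 1] p) * hEx ((Sskew α)^[n + 1] p) *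
              gEx ((Sskew α)^[((n + 1) ^ 2 - (n + 1)) / 2] p)) - 1) = fun _ => 0 := by
        funext p
        simp only [key_prod α _ p, Finset.sum_const, Finset.card_range, nsmul_eq_mul, mul_one]
        rw [Complex.real_smul]
        have hN0 : ((N : ℝ) : ℂ) ≠ 0 := by
          simp only [ne_eq, Complex.ofReal_eq_zero, Nat.cast_eq_zero]
          omega
        push_cast
        push_cast at hN0
        rw [inv_mul_cancel₀ hN0, sub_self]
      rw [hfun]
      simp [eLpNorm_zero]
    exact Tendsto.congr' (by filter_upwards [heq] with N h using h.symm) tendsto_const_nhds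
end
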